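/- arXiv:2605.09590 — 2 statements merged into one kernel-verified Lean document; each statement's English description precedes it below -/
import Mathlib

section
/- Let Σ be an n×n complex Hermitian matrix and v a random vector with i.i.d. entries satisfying E[v_k]=0, E[v_k²]=0, E[|v_k|²]=1, and E[|v_k|⁴]=κ. Then the variance of the single-sample diagonal estimator δ_k(v) = conj(v_k)·(Σ v)_k is Var[δ_k] = (κ−1)·|Σ_{kk}|² + ∑_{ℓ≠k} |Σ_{kℓ}|². -/
/-!
Write `δ_k = conj v_k * ∑ j, S k j * v_j`. Independence and `E[v] = 0` give
`E[conj v_k * v_j] = [j = k]`, so `E[δ_k] = S k k`. Expanding `|δ_k|²` leaves the fourth moments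
`E[|v_k|² * v_j * conj v_m]`: whenever `j ≠ m`, one of `v_j`, `conj v_m` is a centred factor
independent of the other two indices, so the moment vanishes; for `j = m` it is `κ` if `j = k`
and `E|v_k|² * E|v_j|² = 1` otherwise.
-/

open MeasureTheory ProbabilityTheory Finset ComplexConjugate

instance ENNReal.HolderTriple.instFourFourTwo : ENNReal.HolderTriple 4 4 2 :=
  ⟨by
    rw [← ENNReal.add_halves (2 : ENNReal)⁻¹, ENNReal.div_eq_inv_mul,
      ← ENNReal.mul_inv (by simp) (by simp)]
    norm_num⟩

lemma ProbabilityTheory.iIndepFun.integral_comp_prodMk_mul_comp {Ω ι β 𝕜 : Type*}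
    [MeasurableSpace Ω] {μ : Measure Ω} [MeasurableSpace β] [RCLike 𝕜] {f : ι → Ω → β}
    (hindep : iIndepFun f μ) (hmeas : ∀ i, Measurable (f i)) {a b i : ι} (ha : a ≠ i)
    (hb : b ≠ i) {g : β × β → 𝕜} {h : β → 𝕜} (hg : Measurable g) (hh : Measurable h) :
    ∫ ω, g (f a ω, f b ω) * h (f i ω) ∂μ = (∫ ω, g (f a ω, f b ω) ∂μ) * ∫ ω, h (f i ω) ∂μ :=
  (hindep.indepFun_prodMk hmeas a b i ha hb).integral_fun_comp_mul_comp
    ((hmeas a).prodMk (hmeas b)).aemeasurable (hmeas i).aemeasurable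
    hg.aestronglyMeasurable hh.aestronglyMeasurable

lemma ofReal_norm_conj_mul_dotProduct_sq {ι : Type*} [Fintype ι] (z : ℂ) (s x : ι → ℂ) :
    ((‖conj z * (s ⬝ᵥ x)‖ ^ 2 : ℝ) : ℂ)
      = ∑ j, ∑ m, s j * conj (s m) * ((‖z‖ : ℂ) ^ 2 * (x j * conj (x m))) := by
  rw [norm_mul, RCLike.norm_conj, mul_pow, Complex.ofReal_mul, Complex.ofReal_pow,
    Complex.ofReal_pow, ← Complex.mul_conj' (s ⬝ᵥ x), dotProduct, map_sum, sum_mul_sum,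
    mul_sum]
  refine sum_congr rfl fun j _ => ?_
  rw [mul_sum]
  refine sum_congr rfl fun m _ => ?_
  simp only [map_mul]
  ring

structure IsIsotropicProbe {Ω ι : Type*} [MeasurableSpace Ω] (v : Ω → ι → ℂ) (κ : ℝ)
    (μ : Measure Ω) : Prop where
  measurable : ∀ k, Measurable fun ω => v ω k
  indep : iIndepFun (fun k ω => v ω k) μ
  integrable_norm_pow_four : ∀ k, Integrable (fun ω => ‖v ω k‖ ^ 4) μ
  integral_eq_zero : ∀ k, ∫ ω, v ω k ∂μ = 0
  integral_norm_sq : ∀ k, ∫ ω, ‖v ω k‖ ^ 2 ∂μ = 1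
  integral_norm_pow_four : ∀ k, ∫ ω, ‖v ω k‖ ^ 4 ∂μ = κ

namespace IsIsotropicProbe

variable {Ω ι : Type*} [MeasurableSpace Ω] {μ : Measure Ω} {v : Ω → ι → ℂ} {κ : ℝ}

lemma memLp_four (hv : IsIsotropicProbe v κ μ) (k : ι) : MemLp (fun ω => v ω k) 4 μ :=
  (integrable_norm_rpow_iff (hv.measurable k).aestronglyMeasurable (by norm_num)
    (by norm_num)).1 (by simpa using hv.integrable_norm_pow_four k)

lemma integrable_conj_mul [IsFiniteMeasure μ] (hv : IsIsotropicProbe v κ μ) (k j : ι) :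
    Integrable (fun ω => conj (v ω k) * v ω j) μ :=
  ((hv.memLp_four k).star.mono_exponent (by norm_num : (2 : ENNReal) ≤ 4)).integrable_mul
    ((hv.memLp_four j).mono_exponent (by norm_num : (2 : ENNReal) ≤ 4))

lemma integrable_norm_sq_mul_mul_conj (hv : IsIsotropicProbe v κ μ) (k j m : ι) :
    Integrable (fun ω => (‖v ω k‖ : ℂ) ^ 2 * (v ω j * conj (v ω m))) μ := by
  simp_rw [← Complex.conj_mul']
  exact ((hv.memLp_four k).mul (r := 2) (hv.memLp_four k).star).integrable_mul
    ((hv.memLp_four m).star.mul (r := 2) (hv.memLp_four j))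

lemma integral_ofReal_norm_sq (hv : IsIsotropicProbe v κ μ) (k : ι) :
    ∫ ω, (‖v ω k‖ : ℂ) ^ 2 ∂μ = 1 := by
  simp_rw [← Complex.ofReal_pow, integral_complex_ofReal, hv.integral_norm_sq, Complex.ofReal_one]

variable [DecidableEq ι]

lemma integral_conj_mul (hv : IsIsotropicProbe v κ μ) (k j : ι) :
    ∫ ω, conj (v ω k) * v ω j ∂μ = if j = k then 1 else 0 := by
  rcases eq_or_ne j k with rfl | hjk
  · simp_rw [Complex.conj_mul', hv.integral_ofReal_norm_sq, if_pos]
  · have := hv.indep.integral_comp_prodMk_mul_comp hv.measurable hjk.symm hjk.symm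
      (g := fun p => conj p.1) (h := id) (by fun_prop) measurable_id
    simp only [id] at this
    rw [this, hv.integral_eq_zero, mul_zero, if_neg hjk]

lemma integral_norm_sq_mul_mul_conj (hv : IsIsotropicProbe v κ μ) (k j m : ι) :
    ∫ ω, (‖v ω k‖ : ℂ) ^ 2 * (v ω j * conj (v ω m)) ∂μ
      = if j = m then (if j = k then (κ : ℂ) else 1) else 0 := by
  rcases eq_or_ne j m with rfl | hjm
  · simp_rw [Complex.mul_conj', if_pos]
    rcases eq_or_ne j k with rfl | hjk
    · simp_rw [← pow_add, if_pos, ← Complex.ofReal_pow, integral_complex_ofReal,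
        hv.integral_norm_pow_four]
    · have := hv.indep.integral_comp_prodMk_mul_comp hv.measurable hjk.symm hjk.symm
        (g := fun p => (‖p.1‖ : ℂ) ^ 2) (h := fun z => (‖z‖ : ℂ) ^ 2) (by fun_prop) (by fun_prop)
      rw [this, hv.integral_ofReal_norm_sq, hv.integral_ofReal_norm_sq, mul_one, if_neg hjk]
  rw [if_neg hjm]
  rcases eq_or_ne j k with rfl | hjk
  · have := hv.indep.integral_comp_prodMk_mul_comp hv.measurable hjm hjm
      (g := fun p => (‖p.1‖ : ℂ) ^ 2 * p.1) (h := conj) (by fun_prop) (by fun_prop)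
    simp_rw [← mul_assoc, this, integral_conj, hv.integral_eq_zero, map_zero, mul_zero]
  · have := hv.indep.integral_comp_prodMk_mul_comp hv.measurable hjk.symm hjm.symm
      (g := fun p => (‖p.1‖ : ℂ) ^ 2 * conj p.2) (h := id) (by fun_prop) measurable_id
    simp only [id] at this
    calc _ = ∫ ω, (‖v ω k‖ : ℂ) ^ 2 * conj (v ω m) * v ω j ∂μ := by congr with ω; ring
      _ = 0 := by rw [this, hv.integral_eq_zero, mul_zero]

variable [Fintype ι]

lemma integral_conj_mul_dotProduct [IsFiniteMeasure μ] (hv : IsIsotropicProbe v κ μ)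
    (s : ι → ℂ) (k : ι) : ∫ ω, conj (v ω k) * (s ⬝ᵥ v ω) ∂μ = s k := by
  simp_rw [dotProduct, mul_sum, mul_left_comm (conj _)]
  rw [integral_finsetSum _ fun j _ => (hv.integrable_conj_mul k j).const_mul _]
  simp_rw [integral_const_mul, hv.integral_conj_mul, mul_ite, mul_one, mul_zero, sum_ite_eq',
    if_pos (mem_univ k)]

lemma integral_norm_conj_mul_dotProduct_sq (hv : IsIsotropicProbe v κ μ) (s : ι → ℂ)
    (k : ι) : ∫ ω, ‖conj (v ω k) * (s ⬝ᵥ v ω)‖ ^ 2 ∂μ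
      = κ * ‖s k‖ ^ 2 + ∑ ℓ ∈ univ.erase k, ‖s ℓ‖ ^ 2 := by
  apply Complex.ofReal_injective
  rw [← integral_complex_ofReal]
  simp_rw [ofReal_norm_conj_mul_dotProduct_sq]
  rw [integral_finsetSum _ fun j _ => integrable_finsetSum _ fun m _ =>
    (hv.integrable_norm_sq_mul_mul_conj k j m).const_mul _]
  simp_rw [integral_finsetSum _ fun m _ =>
    (hv.integrable_norm_sq_mul_mul_conj k _ m).const_mul _, integral_const_mul,
    hv.integral_norm_sq_mul_mul_conj, mul_ite, mul_zero, sum_ite_eq, if_pos (mem_univ _),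
    Complex.mul_conj']
  rw [← add_sum_erase _ _ (mem_univ k)]
  push_cast
  rw [if_pos rfl, mul_comm]
  congr 1
  exact sum_congr rfl fun ℓ hℓ => by rw [if_neg (ne_of_mem_erase hℓ), mul_one]

end IsIsotropicProbe

theorem pico_single_sample_variance_general
    {Ω : Type*} [MeasurableSpace Ω] {μ : Measure Ω} [IsProbabilityMeasure μ]
    {n : ℕ} (S : Matrix (Fin n) (Fin n) ℂ)
    (v : Ω → Fin n → ℂ) (κ : ℝ)
    (hmeas : ∀ k, Measurable fun ω => v ω k)
    (hindep : iIndepFun (fun k ω => v ω k) μ)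
    (hL4 : ∀ k, Integrable (fun ω => ‖v ω k‖ ^ 4) μ)
    (hmean : ∀ k, ∫ ω, v ω k ∂μ = 0)
    (hvar : ∀ k, ∫ ω, ‖v ω k‖ ^ 2 ∂μ = 1)
    (hkurt : ∀ k, ∫ ω, ‖v ω k‖ ^ 4 ∂μ = κ)
    (k : Fin n) :
    (∫ ω, ‖(starRingEnd ℂ) (v ω k) * (S.mulVec (v ω)) k‖ ^ 2 ∂μ)
      - ‖∫ ω, (starRingEnd ℂ) (v ω k) * (S.mulVec (v ω)) k ∂μ‖ ^ 2
    = (κ - 1) * ‖S k k‖ ^ 2 + ∑ ℓ ∈ univ.erase k, ‖S k ℓ‖ ^ 2 := by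
  have hv : IsIsotropicProbe v κ μ := ⟨hmeas, hindep, hL4, hmean, hvar, hkurt⟩
  simp only [Matrix.mulVec]
  rw [hv.integral_norm_conj_mul_dotProduct_sq, hv.integral_conj_mul_dotProduct]
  ring

/-- Single-sample variance of the stochastic diagonal estimator for a complex
Hermitian matrix with i.i.d. probe entries having the stated moments:
`Var[δ_k] = (κ - 1) * |Σ_kk|² + ∑_{ℓ ≠ k} |Σ_kℓ|²`. -/
theorem pico_single_sample_variance
    {Ω : Type*} [MeasurableSpace Ω] {μ : Measure Ω} [IsProbabilityMeasure μ]
    {n : ℕ} (S : Matrix (Fin n) (Fin n) ℂ) (hS : S.IsHermitian)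
    (v : Ω → Fin n → ℂ) (κ : ℝ)
    (hmeas : ∀ k, Measurable fun ω => v ω k)
    (hindep : iIndepFun (fun k ω => v ω k) μ)
    (hident : ∀ k k' : Fin n,
      Measure.map (fun ω => v ω k) μ = Measure.map (fun ω => v ω k') μ)
    (hL4 : ∀ k, Integrable (fun ω => ‖v ω k‖ ^ 4) μ)
    (hmean : ∀ k, ∫ ω, v ω k ∂μ = 0)
    (hsq : ∀ k, ∫ ω, (v ω k) ^ 2 ∂μ = 0)
    (hvar : ∀ k, ∫ ω, ‖v ω k‖ ^ 2 ∂μ = 1)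
    (hkurt : ∀ k, ∫ ω, ‖v ω k‖ ^ 4 ∂μ = κ)
    (k : Fin n) :
    (∫ ω, ‖(starRingEnd ℂ) (v ω k) * (S.mulVec (v ω)) k‖ ^ 2 ∂μ)
      - ‖∫ ω, (starRingEnd ℂ) (v ω k) * (S.mulVec (v ω)) k ∂μ‖ ^ 2
    = (κ - 1) * ‖S k k‖ ^ 2 + ∑ ℓ ∈ univ.erase k, ‖S k ℓ‖ ^ 2 :=
  pico_single_sample_variance_general S v κ hmeas hindep hL4 hmean hvar hkurt k
end

section
/- Let M be Hermitian positive-definite and λ > 0. Then every diagonal entry of (M + λI)^{-1} M (M + λI)^{-1} is strictly less than the corresponding diagonal entry of M^{-1}. -/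
open scoped ComplexOrder

/-! With `S = M + λ • 1` one has `S M⁻¹ S = M + 2λ • 1 + λ² • M⁻¹`, hence
`M⁻¹ - S⁻¹ M S⁻¹ = S⁻¹ (2λ • 1 + λ² • M⁻¹) S⁻¹`, a congruence of a positive definite matrix.
The diagonal entries of a positive definite matrix are positive. -/

namespace Matrix

variable {n : Type*} [Fintype n] [DecidableEq n]

theorem inv_sub_inv_add_smul_one_mul_mul_inv {K : Type*} [CommRing K] {M : Matrix n n K}
    (c : K) (hM : IsUnit M) (hS : IsUnit (M + c • 1)) :
    M⁻¹ - (M + c • 1)⁻¹ * M * (M + c • 1)⁻¹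
      = (M + c • 1)⁻¹ * ((2 * c) • 1 + c ^ 2 • M⁻¹) * (M + c • 1)⁻¹ := by
  rw [isUnit_iff_isUnit_det] at hM hS
  have hSMS : (M + c • 1) * M⁻¹ * (M + c • 1) = M + ((2 * c) • 1 + c ^ 2 • M⁻¹) := by
    simp only [add_mul, mul_add, Matrix.smul_mul, Matrix.mul_smul, one_mul, mul_one,
      mul_nonsing_inv _ hM, nonsing_inv_mul _ hM, smul_smul]
    module
  set S := M + c • 1
  calc M⁻¹ - S⁻¹ * M * S⁻¹ = S⁻¹ * (S * M⁻¹ * S) * S⁻¹ - S⁻¹ * M * S⁻¹ := by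
        rw [show S⁻¹ * (S * M⁻¹ * S) * S⁻¹ = (S⁻¹ * S) * M⁻¹ * (S * S⁻¹) by noncomm_ring,
          nonsing_inv_mul _ hS, mul_nonsing_inv _ hS, one_mul, mul_one]
    _ = _ := by rw [hSMS]; noncomm_ring

variable {𝕜 : Type*} [RCLike 𝕜]

theorem PosDef.inv_sub_inv_add_smul_one_mul_mul_inv {M : Matrix n n 𝕜} (hM : M.PosDef)
    {c : 𝕜} (hc : 0 < c) :
    (M⁻¹ - (M + c • 1)⁻¹ * M * (M + c • 1)⁻¹).PosDef := by
  have hS : (M + c • 1).PosDef := hM.add (PosDef.one.smul hc)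
  rw [Matrix.inv_sub_inv_add_smul_one_mul_mul_inv c hM.isUnit hS.isUnit]
  nth_rewrite 1 [← hS.inv.isHermitian]
  refine (IsUnit.posDef_star_left_conjugate_iff ?_).2 ?_
  · simpa using hS.isUnit
  · exact (PosDef.one.smul (by positivity)).add (hM.inv.smul (by positivity))

theorem PosDef.inv_add_smul_one_mul_mul_inv_apply_lt {M : Matrix n n 𝕜} (hM : M.PosDef)
    {c : 𝕜} (hc : 0 < c) (i : n) :
    ((M + c • 1)⁻¹ * M * (M + c • 1)⁻¹) i i < M⁻¹ i i :=
  sub_pos.1 ((hM.inv_sub_inv_add_smul_one_mul_mul_inv hc).diag_pos (i := i))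

end Matrix

/-- Strict diagonal shrinkage under Tikhonov regularization: every diagonal
entry of `(M+λI)⁻¹ M (M+λI)⁻¹` is strictly less than the corresponding
diagonal entry of `M⁻¹` (diagonal entries of these Hermitian matrices are
real, so the comparison is between their real parts). -/
theorem tikhonov_diagonal_shrinkage
    {n : ℕ} (M : Matrix (Fin n) (Fin n) ℂ) (hM : M.PosDef)
    (lam : ℝ) (hlam : 0 < lam) (k : Fin n) :
    (((M + (lam : ℂ) • (1 : Matrix (Fin n) (Fin n) ℂ))⁻¹ * M
        * (M + (lam : ℂ) • (1 : Matrix (Fin n) (Fin n) ℂ))⁻¹) k k).re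
      < (M⁻¹ k k).re :=
  (Complex.lt_def.1 (hM.inv_add_smul_one_mul_mul_inv_apply_lt (Complex.zero_lt_real.2 hlam) k)).1
end
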